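/- arXiv:1906.04688 — 3 statements merged into one kernel-verified Lean document; each statement's English description precedes it below -/
import Mathlib

section
/- Let z̄_1,…,z̄_n be unit vectors in ℝ^d such that |⟨z̄_i, z̄_j⟩| < 1 for all i ≠ j, and let γ > 0. Then the sets W_1,…,W_n are pairwise disjoint: W_i ∩ W_j = ∅ whenever i ≠ j. -/
open RealInnerProductSpace

/-- The set `W_i = {w : |⟨w, z̄_i⟩| ≤ γ, and |⟨w − ⟨w, z̄_i⟩ z̄_i, z̄_j⟩| ≥ 2γ for all j ≠ i}`. -/
def sepSet {d n : ℕ} (zbar : Fin n → EuclideanSpace ℝ (Fin d)) (γ : ℝ) (i : Fin n) :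
    Set (EuclideanSpace ℝ (Fin d)) :=
  {w | |⟪w, zbar i⟫| ≤ γ ∧ ∀ j, j ≠ i → 2 * γ ≤ |⟪w - ⟪w, zbar i⟫ • zbar i, zbar j⟫|}

theorem abs_sub_mul_lt_two_mul {a b c γ : ℝ} (ha : |a| ≤ γ) (hb : |b| ≤ γ) (hc : |c| < 1)
    (hγ : 0 < γ) : |b - a * c| < 2 * γ :=
  calc |b - a * c| ≤ |b| + |a| * |c| := by rw [← abs_mul]; exact abs_sub _ _
    _ ≤ γ + γ * |c| := by gcongr
    _ < γ + γ * 1 := by gcongr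
    _ = 2 * γ := by ring

theorem abs_inner_sub_inner_smul_lt_two_mul {E : Type*} [NormedAddCommGroup E]
    [InnerProductSpace ℝ E] {x u v : E} {γ : ℝ} (hu : |⟪x, u⟫| ≤ γ) (hv : |⟪x, v⟫| ≤ γ)
    (huv : |⟪u, v⟫| < 1) (hγ : 0 < γ) : |⟪x - ⟪x, u⟫ • u, v⟫| < 2 * γ := by
  rw [inner_sub_left, real_inner_smul_left]
  exact abs_sub_mul_lt_two_mul hu hv huv hγ

theorem sepSet_pairwise_disjoint_general {d n : ℕ} (zbar : Fin n → EuclideanSpace ℝ (Fin d))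
    (hangle : ∀ i j, i ≠ j → |⟪zbar i, zbar j⟫| < 1)
    (γ : ℝ) (hγ : 0 < γ) :
    ∀ i j, i ≠ j → sepSet zbar γ i ∩ sepSet zbar γ j = ∅ := by
  intro i j hij
  refine Set.eq_empty_of_forall_notMem fun w ⟨⟨hwi, hsep⟩, hwj, _⟩ => ?_
  exact (hsep j hij.symm).not_gt
    (abs_inner_sub_inner_smul_lt_two_mul hwi hwj (hangle i j hij) hγ)

/-- If `z̄_1, …, z̄_n` are unit vectors with `|⟨z̄_i, z̄_j⟩| < 1` for `i ≠ j` and `γ > 0`,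
then the sets `W_i` are pairwise disjoint. -/
theorem sepSet_pairwise_disjoint {d n : ℕ} (zbar : Fin n → EuclideanSpace ℝ (Fin d))
    (hunit : ∀ i, ‖zbar i‖ = 1)
    (hangle : ∀ i j, i ≠ j → |⟪zbar i, zbar j⟫| < 1)
    (γ : ℝ) (hγ : 0 < γ) :
    ∀ i j, i ≠ j → sepSet zbar γ i ∩ sepSet zbar γ j = ∅ :=
  sepSet_pairwise_disjoint_general zbar hangle γ hγ
end

section
/- Let z_1,…,z_n ∈ ℝ^d be nonzero vectors, z̄_j = z_j/‖z_j‖₂, let γ > 0, and fix an index i. If w ∈ W_i, then for every j ≠ i one has 1{⟨w, z_j⟩ ≥ 0} = 1{⟨w − ⟨w, z̄_i⟩ z̄_i, z_j⟩ ≥ 0}; consequently, for any coefficients a_1,…,a_n ∈ ℝ, h(w) = a_i · 1{⟨w, z̄_i⟩ ≥ 0} · z_i + Σ_{j ≠ i} a_j · 1{⟨w − ⟨w, z̄_i⟩ z̄_i, z_j⟩ ≥ 0} · z_j. -/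
/-!
Write `w' = w - ⟪w, z̄ᵢ⟫ z̄ᵢ`. Since `z̄ᵢ` and `z̄ⱼ` have norm at most one, `⟪w, z̄ⱼ⟫` and `⟪w', z̄ⱼ⟫`
differ by `⟪w, z̄ᵢ⟫ ⟪z̄ᵢ, z̄ⱼ⟫`, which is at most `γ` in absolute value, whereas `|⟪w', z̄ⱼ⟫| ≥ 2γ`
on `Wᵢ`; so the two inner products have the same sign. Rescaling `z̄ⱼ` to `zⱼ` does not change
signs, and splitting off the `i`-th summand of `h(w)` gives the decomposition.
-/

open RealInnerProductSpace

/-- `h(w) = Σ_j a_j · 1{⟨w, z_j⟩ ≥ 0} · z_j`, the ReLU-gradient sum. -/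
noncomputable def reluSum {d n : ℕ} (a : Fin n → ℝ) (z : Fin n → EuclideanSpace ℝ (Fin d))
    (w : EuclideanSpace ℝ (Fin d)) : EuclideanSpace ℝ (Fin d) :=
  ∑ j, (a j * if 0 ≤ ⟪w, z j⟫ then 1 else 0) • z j

lemma nonneg_iff_nonneg_of_abs_sub_le {a b γ : ℝ} (hab : |a - b| ≤ γ) (hb : 2 * γ ≤ |b|) :
    0 ≤ a ↔ 0 ≤ b := by
  rw [abs_sub_le_iff] at hab
  rcases le_abs'.mp hb with hb | hb <;> constructor <;> intro h <;> linarith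

section InnerProductSpace

variable {E : Type*} [NormedAddCommGroup E] [InnerProductSpace ℝ E]

lemma norm_inv_norm_smul_le_one (x : E) : ‖‖x‖⁻¹ • x‖ ≤ 1 := by
  rcases eq_or_ne x 0 with rfl | hx
  · simp
  · exact (norm_smul_inv_norm hx).le

lemma inner_inv_norm_smul_nonneg_iff (v x : E) : 0 ≤ ⟪v, ‖x‖⁻¹ • x⟫ ↔ 0 ≤ ⟪v, x⟫ := by
  rw [real_inner_smul_right]
  rcases eq_or_ne x 0 with rfl | hx
  · simp
  · exact mul_nonneg_iff_of_pos_left (inv_pos.mpr (norm_pos_iff.mpr hx))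

lemma abs_inner_sub_inner_sub_proj_le {u v : E} (hu : ‖u‖ ≤ 1) (hv : ‖v‖ ≤ 1) (w : E) :
    |⟪w, v⟫ - ⟪w - ⟪w, u⟫ • u, v⟫| ≤ |⟪w, u⟫| := by
  have hdiff : ⟪w, v⟫ - ⟪w - ⟪w, u⟫ • u, v⟫ = ⟪w, u⟫ * ⟪u, v⟫ := by
    rw [inner_sub_left, real_inner_smul_left]
    ring
  have huv : |⟪u, v⟫| ≤ 1 :=
    (abs_real_inner_le_norm u v).trans (mul_le_one₀ hu (norm_nonneg v) hv)
  rw [hdiff, abs_mul]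
  exact mul_le_of_le_one_right (abs_nonneg _) huv

lemma inner_nonneg_iff_inner_sub_proj_nonneg {u v w : E} {γ : ℝ} (hu : ‖u‖ ≤ 1)
    (hv : ‖v‖ ≤ 1) (hwu : |⟪w, u⟫| ≤ γ) (hwv : 2 * γ ≤ |⟪w - ⟪w, u⟫ • u, v⟫|) :
    0 ≤ ⟪w, v⟫ ↔ 0 ≤ ⟪w - ⟪w, u⟫ • u, v⟫ :=
  nonneg_iff_nonneg_of_abs_sub_le ((abs_inner_sub_inner_sub_proj_le hu hv w).trans hwu) hwv

end InnerProductSpace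

theorem reluSum_decomposition_general {d n : ℕ} (z : Fin n → EuclideanSpace ℝ (Fin d))
    (zbar : Fin n → EuclideanSpace ℝ (Fin d)) (hzbar : ∀ j, zbar j = ‖z j‖⁻¹ • z j)
    (γ : ℝ) (i : Fin n) (w : EuclideanSpace ℝ (Fin d))
    (hw : w ∈ sepSet zbar γ i) :
    (∀ j, j ≠ i →
        (if 0 ≤ ⟪w, z j⟫ then (1 : ℝ) else 0)
          = if 0 ≤ ⟪w - ⟪w, zbar i⟫ • zbar i, z j⟫ then 1 else 0) ∧
      ∀ a : Fin n → ℝ,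
        reluSum a z w
          = (a i * if 0 ≤ ⟪w, zbar i⟫ then 1 else 0) • z i
            + ∑ j ∈ Finset.univ.erase i,
                (a j * if 0 ≤ ⟪w - ⟪w, zbar i⟫ • zbar i, z j⟫ then 1 else 0) • z j := by
  obtain ⟨hwi, hwj⟩ := hw
  have hnorm (j : Fin n) : ‖zbar j‖ ≤ 1 := hzbar j ▸ norm_inv_norm_smul_le_one (z j)
  have hsign (v : EuclideanSpace ℝ (Fin d)) (j : Fin n) : 0 ≤ ⟪v, zbar j⟫ ↔ 0 ≤ ⟪v, z j⟫ :=
    hzbar j ▸ inner_inv_norm_smul_nonneg_iff v (z j)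
  have hpattern (j : Fin n) (hj : j ≠ i) :
      0 ≤ ⟪w, z j⟫ ↔ 0 ≤ ⟪w - ⟪w, zbar i⟫ • zbar i, z j⟫ := by
    rw [← hsign, ← hsign]
    exact inner_nonneg_iff_inner_sub_proj_nonneg (hnorm i) (hnorm j) hwi (hwj j hj)
  refine ⟨fun j hj => by simp only [hpattern j hj], fun a => ?_⟩
  rw [reluSum, ← Finset.add_sum_erase _ _ (Finset.mem_univ i)]
  simp only [hsign w i]
  congr 1
  refine Finset.sum_congr rfl fun j hj => ?_
  simp only [hpattern j (Finset.ne_of_mem_erase hj)]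

/-- For nonzero `z_1, …, z_n`, `z̄_j = z_j / ‖z_j‖`, `γ > 0` and `w ∈ W_i`: the ReLU
activation pattern of `w` on `z_j` (`j ≠ i`) agrees with that of the orthogonal component
`w − ⟨w, z̄_i⟩ z̄_i`, and consequently
`h(w) = a_i · 1{⟨w, z̄_i⟩ ≥ 0} · z_i + Σ_{j ≠ i} a_j · 1{⟨w − ⟨w, z̄_i⟩ z̄_i, z_j⟩ ≥ 0} · z_j`. -/
theorem reluSum_decomposition {d n : ℕ} (z : Fin n → EuclideanSpace ℝ (Fin d))
    (hz : ∀ j, z j ≠ 0)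
    (zbar : Fin n → EuclideanSpace ℝ (Fin d)) (hzbar : ∀ j, zbar j = ‖z j‖⁻¹ • z j)
    (γ : ℝ) (hγ : 0 < γ) (i : Fin n) (w : EuclideanSpace ℝ (Fin d))
    (hw : w ∈ sepSet zbar γ i) :
    (∀ j, j ≠ i →
        (if 0 ≤ ⟪w, z j⟫ then (1 : ℝ) else 0)
          = if 0 ≤ ⟪w - ⟪w, zbar i⟫ • zbar i, z j⟫ then 1 else 0) ∧
      ∀ a : Fin n → ℝ,
        reluSum a z w
          = (a i * if 0 ≤ ⟪w, zbar i⟫ then 1 else 0) • z i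
            + ∑ j ∈ Finset.univ.erase i,
                (a j * if 0 ≤ ⟪w - ⟪w, zbar i⟫ • zbar i, z j⟫ then 1 else 0) • z j :=
  reluSum_decomposition_general z zbar hzbar γ i w hw
end

section
/- Let η > 0 and c > 0, and let a : ℕ → ℝ and g : ℕ → ℝ be sequences with a(t) ≥ 0 and g(t) ≥ 0 for all t, satisfying a(t+1) ≤ a(t) − (η/2)·g(t)² and g(t)² ≥ c·a(t) for all t. Then for every T, Σ_{s=0}^{T−1} η·g(s) ≤ 4·√(a(0)/c). -/
/-! Each descent step pays for its movement: `a(t) - a(t+1) ≥ (η/2) g(t)² ≥ (η/2) √c √a(t) g(t)`,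
and `a(t) - a(t+1) ≤ 2 √a(t) (√a(t) - √a(t+1))`. Hence `√c · η g(t) ≤ 4 (√a(t) - √a(t+1))`,
and the sum of these bounds telescopes to at most `4 √a(0)`. -/

open Finset Real

theorem sub_le_two_mul_sqrt_mul_sub_sqrt {x y : ℝ} (hx : 0 ≤ x) (hy : 0 ≤ y) :
    x - y ≤ 2 * √x * (√x - √y) := by
  nlinarith [sq_sqrt hx, sq_sqrt hy, sq_nonneg (√x - √y)]

theorem sqrt_mul_le_four_mul_sub_sqrt_of_descent {η c a a' g : ℝ} (hη : 0 < η) (hc : 0 < c)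
    (ha : 0 ≤ a) (ha' : 0 ≤ a') (hg : 0 ≤ g)
    (hdec : a' ≤ a - η / 2 * g ^ 2) (hpl : c * a ≤ g ^ 2) :
    √c * (η * g) ≤ 4 * √a - 4 * √a' := by
  rcases ha.eq_or_lt with rfl | ha_pos
  · have hg_sq : g ^ 2 ≤ 0 := nonpos_of_mul_nonpos_right (by linarith) hη
    have hg0 : g = 0 := by nlinarith
    have ha'0 : a' = 0 := by nlinarith
    simp [hg0, ha'0]
  · have hsqrt_pos : 0 < √a := sqrt_pos.2 ha_pos
    have hg_ge : √c * √a ≤ g := by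
      rw [← sqrt_mul hc.le]
      exact sqrt_le_iff.2 ⟨hg, hpl⟩
    have hdrop := sub_le_two_mul_sqrt_mul_sub_sqrt ha ha'
    suffices √a * (√c * (η * g)) ≤ √a * (4 * √a - 4 * √a') from
      le_of_mul_le_mul_left this hsqrt_pos
    nlinarith [mul_le_mul_of_nonneg_left hg_ge (mul_nonneg hη.le hg)]

/-- Abstract path-length bound: if `a(t+1) ≤ a(t) − (η/2) g(t)²`, `g(t)² ≥ c·a(t)`,
`a(t) ≥ 0`, `g(t) ≥ 0` and `η, c > 0`, then `Σ_{s<T} η·g(s) ≤ 4·√(a(0)/c)`. -/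
theorem path_length_bound (η c : ℝ) (hη : 0 < η) (hc : 0 < c)
    (a g : ℕ → ℝ) (ha : ∀ t, 0 ≤ a t) (hg : ∀ t, 0 ≤ g t)
    (hdec : ∀ t, a (t + 1) ≤ a t - η / 2 * g t ^ 2)
    (hpl : ∀ t, c * a t ≤ g t ^ 2) :
    ∀ T : ℕ, ∑ s ∈ Finset.range T, η * g s ≤ 4 * Real.sqrt (a 0 / c) := by
  intro T
  have hstep (t : ℕ) : √c * (η * g t) ≤ 4 * √(a t) - 4 * √(a (t + 1)) :=
    sqrt_mul_le_four_mul_sub_sqrt_of_descent hη hc (ha t) (ha (t + 1)) (hg t) (hdec t) (hpl t)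
  have hsum : √c * ∑ s ∈ range T, η * g s ≤ 4 * √(a 0) :=
    calc √c * ∑ s ∈ range T, η * g s
        = ∑ s ∈ range T, √c * (η * g s) := mul_sum _ _ _
      _ ≤ ∑ s ∈ range T, (4 * √(a s) - 4 * √(a (s + 1))) := sum_le_sum fun t _ => hstep t
      _ = 4 * √(a 0) - 4 * √(a T) := sum_range_sub' (fun s => 4 * √(a s)) T
      _ ≤ 4 * √(a 0) := by linarith [sqrt_nonneg (a T)]
  rw [sqrt_div (ha 0), mul_div_assoc', le_div_iff₀ (sqrt_pos.2 hc)]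
  linarith
end
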